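/- arXiv:1509.08876 — 2 statements merged into one kernel-verified Lean document; each statement's English description precedes it below -/
import Mathlib

section
/- For every integer n ≥ 3, the expected online domination number of the wheel graph with n spokes satisfies γ_o(H_n) = 1 + (n/(n+1)) · γ_o(P_{n−3}). -/
/- The dominating set produced by the online domination algorithm on `G` when vertices are
   revealed in the order of the list `l`: a revealed vertex is added iff no neighbor is
   already in the set. -/
open Classical in
noncomputable def domList {V : Type*} [DecidableEq V] (G : SimpleGraph V) (l : List V) : Finset V :=
  l.foldl (fun D v => if ∃ w ∈ D, G.Adj w v then D else insert v D) ∅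

/- `γ_o(G)`: the expected size of the dominating set produced by the online domination
   algorithm on `G`, when the vertices are revealed in a uniformly random order. -/
noncomputable def gammaO {V : Type*} [Fintype V] [DecidableEq V] (G : SimpleGraph V) : ℝ :=
  (∑ e : Fin (Fintype.card V) ≃ V, ((domList G (List.ofFn fun i => e i)).card : ℝ)) /
    Nat.factorial (Fintype.card V)

/- The path graph `P n` on `Fin n`: vertex `v` represents the label `v + 1 ∈ {1, ..., n}`,
   and consecutive labels are adjacent. -/
def pathGraph (n : ℕ) : SimpleGraph (Fin n) where
  Adj i j := (i : ℕ) + 1 = j ∨ (j : ℕ) + 1 = i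
  symm := ⟨fun i j h => h.symm⟩
  loopless := ⟨by intro i h; omega⟩

/- The wheel graph with `n` spokes: vertex `0` is the center, adjacent to every other vertex,
   and the vertices `1, ..., n` form a cycle. -/
def wheelGraph (n : ℕ) : SimpleGraph (Fin (n + 1)) where
  Adj i j := i ≠ j ∧ (i = 0 ∨ j = 0 ∨
    ((i : ℕ) % n + 1 = j ∨ (j : ℕ) % n + 1 = i))
  symm := by
    constructor
    intro i j h
    exact ⟨h.1.symm, by tauto⟩
  loopless := ⟨fun i h => h.1 rfl⟩

/-!
Condition on the first revealed vertex `v`. Once `v` is in `D`, no vertex of its closed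
neighbourhood can join `D`, and the algorithm runs on the remaining vertices exactly as it would on
the subgraph they span. For the centre this subgraph is empty; for a rim vertex it is a path on
`n - 3` vertices, and the order in which its vertices are revealed is again uniformly random, since
permuting them among themselves preserves the event "`v` comes first" and relabels that order.
Rotating the rim shows that all rim vertices contribute alike, so
`γ_o(H_n) = 1 / (n + 1) + n / (n + 1) * (1 + γ_o(P_{n-3}))`.
-/

open Finset
open scoped Nat

open Classical in
noncomputable def domStep {V : Type*} [DecidableEq V] (G : SimpleGraph V) (D : Finset V) (v : V) :
    Finset V :=
  if ∃ w ∈ D, G.Adj w v then D else insert v D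

section domList

variable {V W : Type*} [DecidableEq V] [DecidableEq W] {G : SimpleGraph V}

theorem domList_eq_foldl (G : SimpleGraph V) (l : List V) :
    domList G l = l.foldl (domStep G) ∅ := rfl

theorem domStep_of_exists {D : Finset V} {u : V} (h : ∃ w ∈ D, G.Adj w u) :
    domStep G D u = D :=
  if_pos h

theorem domStep_of_not_exists {D : Finset V} {u : V} (h : ¬∃ w ∈ D, G.Adj w u) :
    domStep G D u = insert u D :=
  if_neg h

theorem domStep_of_mem {D : Finset V} {u : V} (hu : u ∈ D) : domStep G D u = D := by
  by_cases h : ∃ w ∈ D, G.Adj w u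
  · exact domStep_of_exists h
  · rw [domStep_of_not_exists h, insert_eq_of_mem hu]

theorem domStep_subset_insert (D : Finset V) (u : V) : domStep G D u ⊆ insert u D := by
  by_cases h : ∃ w ∈ D, G.Adj w u
  · rw [domStep_of_exists h]; exact subset_insert u D
  · rw [domStep_of_not_exists h]

theorem domStep_insert_of_not_adj {D : Finset V} {u v : V} (h : ¬G.Adj v u) :
    domStep G (insert v D) u = insert v (domStep G D u) := by
  by_cases hD : ∃ w ∈ D, G.Adj w u
  · rw [domStep_of_exists hD, domStep_of_exists (by simpa [h] using hD)]
  · rw [domStep_of_not_exists hD, domStep_of_not_exists (by simpa [h] using hD), insert_comm]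

theorem foldl_domStep_subset (l : List V) (D : Finset V) :
    l.foldl (domStep G) D ⊆ D ∪ l.toFinset := by
  induction l generalizing D with
  | nil => simp
  | cons u l ih =>
    calc l.foldl (domStep G) (domStep G D u)
        ⊆ domStep G D u ∪ l.toFinset := ih _
      _ ⊆ insert u D ∪ l.toFinset := union_subset_union (domStep_subset_insert D u) Subset.rfl
      _ = D ∪ (u :: l).toFinset := by rw [List.toFinset_cons, insert_union, union_insert]

theorem domList_subset (G : SimpleGraph V) (l : List V) : domList G l ⊆ l.toFinset := by
  rw [domList_eq_foldl]
  simpa using foldl_domStep_subset (G := G) l ∅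

theorem foldl_domStep_insert {v : V} (P : V → Prop) [DecidablePred P]
    (hP : ∀ w, P w ↔ w ≠ v ∧ ¬G.Adj v w) (l : List V) {D : Finset V} (hD : ∀ w ∈ D, P w) :
    l.foldl (domStep G) (insert v D) = insert v ((l.filter P).foldl (domStep G) D) := by
  induction l generalizing D with
  | nil => rfl
  | cons u l ih =>
    by_cases hu : P u
    · have hstep := domStep_insert_of_not_adj (D := D) ((hP u).1 hu).2
      rw [List.foldl_cons, hstep, ih, List.filter_cons_of_pos (by simpa using hu),
        List.foldl_cons]
      intro w hw
      rcases mem_insert.1 (domStep_subset_insert D u hw) with rfl | hw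
      exacts [hu, hD w hw]
    · have hstep : domStep G (insert v D) u = insert v D := by
        rcases not_and_or.1 ((hP u).not.1 hu) with huv | hadj
        · exact domStep_of_mem (by simp [not_not.1 huv])
        · exact domStep_of_exists ⟨v, mem_insert_self v D, not_not.1 hadj⟩
      rw [List.foldl_cons, hstep, ih hD, List.filter_cons_of_neg (by simpa using hu)]

theorem domList_cons {v : V} (P : V → Prop) [DecidablePred P]
    (hP : ∀ w, P w ↔ w ≠ v ∧ ¬G.Adj v w) (l : List V) :
    domList G (v :: l) = insert v (domList G (l.filter P)) := by
  rw [domList_eq_foldl, List.foldl_cons, domStep_of_not_exists (by simp)]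
  exact foldl_domStep_insert P hP l (by simp)

theorem card_domList_cons {v : V} (P : V → Prop) [DecidablePred P]
    (hP : ∀ w, P w ↔ w ≠ v ∧ ¬G.Adj v w) (l : List V) :
    #(domList G (v :: l)) = #(domList G (l.filter P)) + 1 := by
  rw [domList_cons P hP, card_insert_of_notMem]
  intro hv
  have := domList_subset G _ hv
  simp only [List.mem_toFinset, List.mem_filter, decide_eq_true_eq] at this
  exact ((hP v).1 this.2).1 rfl

theorem domList_map {G' : SimpleGraph W} (f : G ↪g G') (l : List V) :
    domList G' (l.map f) = (domList G l).map f.toEmbedding := by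
  suffices ∀ D : Finset V, (l.map f).foldl (domStep G') (D.map f.toEmbedding) =
      (l.foldl (domStep G) D).map f.toEmbedding from this ∅
  induction l with
  | nil => simp
  | cons u l ih =>
    intro D
    rw [List.map_cons, List.foldl_cons, List.foldl_cons, ← ih]
    by_cases h : ∃ w ∈ D, G.Adj w u
    · rw [domStep_of_exists h, domStep_of_exists (by simpa using h)]
    · rw [domStep_of_not_exists h, domStep_of_not_exists (by simpa using h), map_insert]
      rfl

theorem card_domList_map {G' : SimpleGraph W} (f : G ↪g G') (l : List V) :
    #(domList G' (l.map f)) = #(domList G l) := by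
  rw [domList_map, card_map]

end domList

section orderings

open Equiv Function Fintype

variable {V M : Type*} [Fintype V] [DecidableEq V] [AddCommMonoid M]

theorem exists_equiv_ofFn_eq_of_nodup {l : List V} (hl : l.Nodup) (hmem : ∀ v, v ∈ l) :
    ∃ e : Fin (card V) ≃ V, List.ofFn e = l := by
  let e₁ := hl.getEquivOfForallMemList l hmem
  have hlen : l.length = card V := by rw [← card_congr e₁, Fintype.card_fin]
  exact ⟨(finCongr hlen.symm).trans e₁, (List.ofFn_congr hlen l.get).symm.trans (List.ofFn_get l)⟩

theorem sum_map_perm_eq_sum_ofFn {l : List V} (hl : l.Nodup) (hmem : ∀ v, v ∈ l)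
    (g : List V → M) :
    ∑ q : Perm V, g (l.map q) = ∑ e : Fin (card V) ≃ V, g (List.ofFn e) := by
  obtain ⟨e₀, rfl⟩ := exists_equiv_ofFn_eq_of_nodup hl hmem
  refine Fintype.sum_equiv (equivCongr e₀.symm (Equiv.refl V)) _ _ fun q => ?_
  rw [List.map_ofFn]
  rfl

theorem sum_card_domList_ofFn (G : SimpleGraph V) :
    ∑ e : Fin (card V) ≃ V, (#(domList G (List.ofFn e)) : ℝ) = (card V)! * gammaO G := by
  rw [gammaO, mul_div_cancel₀ _ (by positivity)]

theorem sum_card_domList_map_perm (G : SimpleGraph V) {l : List V} (hl : l.Nodup)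
    (hmem : ∀ v, v ∈ l) :
    ∑ q : Perm V, (#(domList G (l.map q)) : ℝ) = (card V)! * gammaO G := by
  rw [sum_map_perm_eq_sum_ofFn hl hmem fun l => (#(domList G l) : ℝ), sum_card_domList_ofFn]

theorem gammaO_of_isEmpty [IsEmpty V] (G : SimpleGraph V) : gammaO G = 0 := by
  simp [gammaO, domList]

theorem sum_filter_apply_eq_mul_left (ψ : Perm V) (a b : V) (f : Perm V → M) :
    ∑ p : Perm V with p a = b, f (ψ * p) = ∑ p : Perm V with p a = ψ b, f p :=
  sum_nbij' (ψ * ·) (ψ⁻¹ * ·) (by simp) (by simp +contextual) (by simp) (by simp) fun _ _ => rfl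

theorem card_filter_perm_apply_eq (a b : V) : #{p : Perm V | p a = b} = (card V - 1)! := by
  have hfiber (c : V) : #{p : Perm V | p a = c} = #{p : Perm V | p a = a} := by
    rw [card_eq_sum_ones, card_eq_sum_ones, ← swap_apply_left a c]
    exact (sum_filter_apply_eq_mul_left (swap a c) a a fun _ => 1).symm
  have hpos : 0 < card V := card_pos_iff.2 ⟨a⟩
  have htotal : card V * #{p : Perm V | p a = a} = card V * (card V - 1)! :=
    calc card V * #{p : Perm V | p a = a}
        = ∑ c : V, #{p : Perm V | p a = c} := by simp [hfiber]
      _ = #(univ : Finset (Perm V)) := (card_eq_sum_card_fiberwise (by simp)).symm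
      _ = card V * (card V - 1)! := by
        rw [card_univ, Fintype.card_perm, Nat.mul_factorial_pred hpos.ne']
  exact (hfiber b).trans (Nat.eq_of_mul_eq_mul_left hpos htotal)

end orderings

section averaging

open Equiv Fintype

variable {V β M : Type*} [Fintype β] [DecidableEq β] [AddCommMonoid M]

/-- Averaging over the action of `ρ`: since `L` is equivariant, `L p` for `p` uniform in `S` is a
uniformly random ordering of `β`. -/
theorem factorial_smul_sum_eq_card_smul_sum_ofFn (ρ : Perm β →* Perm V) {S : Finset (Perm V)}
    (hS : ∀ q, ∀ p ∈ S, ρ q * p ∈ S) (L : Perm V → List β)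
    (hL : ∀ q, ∀ p ∈ S, L (ρ q * p) = (L p).map q) (hnodup : ∀ p ∈ S, (L p).Nodup)
    (hmem : ∀ p ∈ S, ∀ b, b ∈ L p) (g : List β → M) :
    (card β)! • ∑ p ∈ S, g (L p) = #S • ∑ e : Fin (card β) ≃ β, g (List.ofFn e) := by
  have hinvariant (q : Perm β) : ∑ p ∈ S, g ((L p).map q) = ∑ p ∈ S, g (L p) :=
    sum_nbij' (ρ q * ·) (ρ q⁻¹ * ·) (hS q) (hS q⁻¹) (by simp) (by simp)
      fun p hp => by rw [hL q p hp]
  calc (card β)! • ∑ p ∈ S, g (L p)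
      = ∑ q : Perm β, ∑ p ∈ S, g ((L p).map q) := by
        simp only [hinvariant, sum_const, card_univ, Fintype.card_perm]
    _ = ∑ p ∈ S, ∑ q : Perm β, g ((L p).map q) := sum_comm
    _ = #S • ∑ e : Fin (card β) ≃ β, g (List.ofFn e) := by
        rw [← sum_const]
        exact sum_congr rfl fun p hp => sum_map_perm_eq_sum_ofFn (hnodup p hp) (hmem p hp) g

end averaging

section partialInv

open Equiv Function

variable {V β : Type*}

theorem map_filterMap_partialInv {f : β → V} [DecidablePred (· ∈ Set.range f)] (hf : Injective f)
    (l : List V) :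
    (l.filterMap (partialInv f)).map f = l.filter (· ∈ Set.range f) := by
  induction l with
  | nil => rfl
  | cons u l ih =>
    by_cases hu : u ∈ Set.range f
    · obtain ⟨b, rfl⟩ := hu
      simp [partialInv_left hf, ih]
    · have hnone : partialInv f u = none :=
        Option.eq_none_iff_forall_ne_some.2 fun b hb => hu ⟨b, hf.isPartialInv b u |>.1 hb⟩
      rw [List.filterMap_cons_none hnone, ih, List.filter_cons_of_neg (by simpa using hu)]

theorem partialInv_viaEmbedding (ι : β ↪ V) (q : Perm β) (w : V) :
    partialInv ι (q.viaEmbedding ι w) = (partialInv ι w).map q := by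
  by_cases hw : w ∈ Set.range ι
  · obtain ⟨b, rfl⟩ := hw
    rw [Perm.viaEmbedding_apply, partialInv_left ι.injective, partialInv_left ι.injective,
      Option.map_some]
  · have hnone : partialInv ι w = none :=
      Option.eq_none_iff_forall_ne_some.2 fun b hb => hw ⟨b, ι.injective.isPartialInv b w |>.1 hb⟩
    rw [Perm.viaEmbedding_apply_of_notMem q ι w hw, hnone, Option.map_none]

end partialInv

section firstVertex

open Equiv Function Fintype

variable {V β : Type*} [Fintype V] [DecidableEq V] [Fintype β] [DecidableEq β]

theorem sum_card_domList_filter_apply_eq (G : SimpleGraph V) {H : SimpleGraph β} (f : H ↪g G)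
    {v₀ v : V} {l : List V} (hl : (v₀ :: l).Nodup) (hmem : ∀ w, w ∈ v₀ :: l)
    (hf : ∀ w, w ∈ Set.range f ↔ w ≠ v ∧ ¬G.Adj v w) :
    ∑ p : Perm V with p v₀ = v, (#(domList G ((v₀ :: l).map p)) : ℝ) =
      (card V - 1)! * (1 + gammaO H) := by
  classical
  set S : Finset (Perm V) := {p | p v₀ = v}
  let L (p : Perm V) : List β := (l.map p).filterMap (partialInv f)
  have hv : v ∉ Set.range f := fun h => ((hf v).1 h).1 rfl
  have hterm : ∀ p ∈ S, (#(domList G ((v₀ :: l).map p)) : ℝ) = #(domList H (L p)) + 1 := by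
    intro p hp
    rw [List.map_cons, (mem_filter.1 hp).2, card_domList_cons (· ∈ Set.range f) hf,
      ← map_filterMap_partialInv f.injective, card_domList_map f]
    push_cast
    rfl
  have hS : ∀ q, ∀ p ∈ S, Perm.viaEmbeddingHom f.toEmbedding q * p ∈ S := by
    intro q p hp
    simp only [S, mem_filter, mem_univ, true_and, Perm.mul_apply] at hp ⊢
    rw [hp, Perm.viaEmbeddingHom_apply, Perm.viaEmbedding_apply_of_notMem _ _ _ hv]
  have hL : ∀ q, ∀ p ∈ S, L (Perm.viaEmbeddingHom f.toEmbedding q * p) = (L p).map q := by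
    intro q p _
    simp only [L, Perm.coe_mul, List.filterMap_map, List.map_filterMap]
    congr 1
    funext w
    exact partialInv_viaEmbedding f.toEmbedding q (p w)
  have hnodup : ∀ p ∈ S, (L p).Nodup := by
    intro p _
    refine (hl.of_cons.map p.injective).filterMap fun a a' b ha ha' => ?_
    rw [Option.mem_def, f.injective.isPartialInv] at ha ha'
    exact ha.symm.trans ha'
  have hcover : ∀ p ∈ S, ∀ b, b ∈ L p := by
    intro p hp b
    have hpb : p.symm (f b) ∈ v₀ :: l := hmem _
    have hne : p.symm (f b) ≠ v₀ := by
      rw [Ne, p.symm_apply_eq, (mem_filter.1 hp).2]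
      exact fun h => hv (h ▸ ⟨b, rfl⟩)
    simp only [L, List.mem_filterMap, List.mem_map]
    exact ⟨f b, ⟨p.symm (f b), (List.mem_cons.1 hpb).resolve_left hne, p.apply_symm_apply _⟩,
      partialInv_left f.injective b⟩
  have havg := factorial_smul_sum_eq_card_smul_sum_ofFn _ hS L hL hnodup hcover
    fun l => (#(domList H l) : ℝ)
  rw [sum_card_domList_ofFn, nsmul_eq_mul, nsmul_eq_mul, ← mul_assoc, mul_comm (#S : ℝ),
    mul_assoc] at havg
  rw [sum_congr rfl hterm, sum_add_distrib,
    mul_left_cancel₀ (by positivity) havg, sum_const, card_filter_perm_apply_eq, nsmul_eq_mul, mul_one]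
  ring

theorem sum_card_domList_filter_apply_iterate_eq (G : SimpleGraph V) (ψ : G ≃g G) (l : List V)
    (v₀ v : V) (k : ℕ) :
    ∑ p : Perm V with p v₀ = ψ^[k] v, (#(domList G (l.map p)) : ℝ) =
      ∑ p : Perm V with p v₀ = v, (#(domList G (l.map p)) : ℝ) := by
  induction k with
  | zero => rfl
  | succ k ih =>
    rw [iterate_succ_apply', ← ih, show ψ (ψ^[k] v) = (ψ.toEquiv : Perm V) (ψ^[k] v) from rfl,
      ← sum_filter_apply_eq_mul_left]
    refine sum_congr rfl fun p _ => ?_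
    rw [Perm.coe_mul, ← List.map_map]
    exact_mod_cast card_domList_map ψ.toEmbedding (l.map p)

end firstVertex

namespace wheelGraph

variable {n : ℕ}

theorem adj_iff {x y : Fin (n + 1)} :
    (wheelGraph n).Adj x y ↔ (x : ℕ) ≠ y ∧ ((x : ℕ) = 0 ∨ (y : ℕ) = 0 ∨ (x : ℕ) + 1 = y ∨
      (y : ℕ) + 1 = x ∨ ((x : ℕ) = n ∧ (y : ℕ) = 1) ∨ ((y : ℕ) = n ∧ (x : ℕ) = 1)) := by
  have hmod (a : Fin (n + 1)) : (a : ℕ) % n = if (a : ℕ) = n then 0 else (a : ℕ) := by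
    split_ifs with h
    · rw [h, Nat.mod_self]
    · exact Nat.mod_eq_of_lt (by omega)
  simp only [wheelGraph, ne_eq, Fin.ext_iff, Fin.val_zero, hmod]
  grind

def rotationFun (n : ℕ) (x : Fin (n + 1)) : Fin (n + 1) :=
  ⟨if (x : ℕ) = 0 then 0 else if (x : ℕ) = n then 1 else x + 1, by split_ifs <;> omega⟩

theorem rotationFun_injective : Function.Injective (rotationFun n) := by
  intro x y h
  simp only [rotationFun, Fin.ext_iff] at h ⊢
  split_ifs at h <;> omega

noncomputable def rotation (n : ℕ) : wheelGraph n ≃g wheelGraph n where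
  toEquiv := Equiv.ofBijective _ (Finite.injective_iff_bijective.1 rotationFun_injective)
  map_rel_iff' {x y} := by
    have := x.isLt
    have := y.isLt
    simp only [Equiv.ofBijective_apply, adj_iff, rotationFun]
    split_ifs <;> grind

theorem rotation_iterate_succ_last {k : ℕ} (hk : k < n) :
    ((rotation n)^[k + 1] (Fin.last n) : ℕ) = k + 1 := by
  induction k with
  | zero =>
    show (rotationFun n (Fin.last n) : ℕ) = 1
    simp only [rotationFun, Fin.val_last]
    split_ifs <;> omega
  | succ k ih =>
    rw [Function.iterate_succ_apply']
    show (rotationFun n _ : ℕ) = _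
    simp only [rotationFun, ih (by omega)]
    split_ifs <;> omega

def pathEmbedding (n : ℕ) : pathGraph (n - 3) ↪g wheelGraph n where
  toFun i := ⟨i + 2, by omega⟩
  inj' i j h := Fin.ext (by simpa using h)
  map_rel_iff' {i j} := by
    have := i.isLt
    have := j.isLt
    change (wheelGraph n).Adj ⟨i + 2, _⟩ ⟨j + 2, _⟩ ↔ _
    simp only [adj_iff, pathGraph]
    omega

theorem val_pathEmbedding (i : Fin (n - 3)) : (pathEmbedding n i : ℕ) = i + 2 := rfl

theorem mem_range_pathEmbedding (hn : 3 ≤ n) (w : Fin (n + 1)) :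
    w ∈ Set.range (pathEmbedding n) ↔ w ≠ Fin.last n ∧ ¬(wheelGraph n).Adj (Fin.last n) w := by
  have := w.isLt
  simp only [Set.mem_range, adj_iff, ne_eq, Fin.ext_iff, Fin.val_last, val_pathEmbedding,
    true_and]
  constructor
  · rintro ⟨i, hi⟩
    omega
  · intro h
    exact ⟨⟨(w : ℕ) - 2, by omega⟩, by dsimp only; omega⟩

theorem sum_card_domList_filter_apply_eq {β : Type*} [Fintype β] [DecidableEq β]
    {H : SimpleGraph β} (f : H ↪g wheelGraph n) {v : Fin (n + 1)}
    (hf : ∀ w, w ∈ Set.range f ↔ w ≠ v ∧ ¬(wheelGraph n).Adj v w) :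
    ∑ p : Equiv.Perm (Fin (n + 1)) with p 0 = v,
      (#(domList (wheelGraph n) ((List.finRange (n + 1)).map p)) : ℝ) = n ! * (1 + gammaO H) := by
  have hl : (0 :: (List.finRange n).map Fin.succ).Nodup := by
    rw [← List.finRange_succ]
    exact List.nodup_finRange _
  have hmem (w : Fin (n + 1)) : w ∈ 0 :: (List.finRange n).map Fin.succ := by
    rw [← List.finRange_succ]
    exact List.mem_finRange w
  rw [List.finRange_succ, _root_.sum_card_domList_filter_apply_eq _ f hl hmem hf, Fintype.card_fin,
    Nat.add_sub_cancel]

theorem sum_card_domList_filter_apply_eq_zero :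
    ∑ p : Equiv.Perm (Fin (n + 1)) with p 0 = 0,
      (#(domList (wheelGraph n) ((List.finRange (n + 1)).map p)) : ℝ) = n ! := by
  rw [sum_card_domList_filter_apply_eq (RelEmbedding.ofIsEmpty (⊥ : SimpleGraph Empty).Adj _)
    (by simp [wheelGraph, eq_comm]), gammaO_of_isEmpty, add_zero, mul_one]

theorem sum_card_domList_filter_apply_eq_succ (hn : 3 ≤ n) (i : Fin n) :
    ∑ p : Equiv.Perm (Fin (n + 1)) with p 0 = i.succ,
      (#(domList (wheelGraph n) ((List.finRange (n + 1)).map p)) : ℝ) =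
      n ! * (1 + gammaO (pathGraph (n - 3))) := by
  have hi : i.succ = (rotation n)^[i + 1] (Fin.last n) :=
    Fin.ext (by rw [rotation_iterate_succ_last i.isLt, Fin.val_succ])
  rw [hi, sum_card_domList_filter_apply_iterate_eq,
    sum_card_domList_filter_apply_eq _ (mem_range_pathEmbedding hn)]

end wheelGraph

theorem gammaO_wheel (n : ℕ) (hn : 3 ≤ n) :
    gammaO (wheelGraph n) = 1 + ((n : ℝ) / ((n : ℝ) + 1)) * gammaO (pathGraph (n - 3)) := by
  set γ := gammaO (pathGraph (n - 3))
  have hsum := sum_card_domList_map_perm (wheelGraph n) (List.nodup_finRange (n + 1))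
    List.mem_finRange
  rw [Fintype.card_fin, ← sum_fiberwise univ (· 0), Fin.sum_univ_succ,
    wheelGraph.sum_card_domList_filter_apply_eq_zero,
    sum_congr rfl fun i _ => wheelGraph.sum_card_domList_filter_apply_eq_succ hn i, sum_const,
    card_univ, Fintype.card_fin, nsmul_eq_mul, Nat.factorial_succ, Nat.cast_mul, mul_assoc] at hsum
  have key : ((n : ℝ) + 1) * gammaO (wheelGraph n) = 1 + n * (1 + γ) :=
    mul_left_cancel₀ (by positivity : (n ! : ℝ) ≠ 0) (by push_cast at hsum; linear_combination -hsum)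
  field_simp
  linear_combination key
end

section
/- For odd n ≥ 1, the unique independent dominating set of P_n of size (n+1)/2 is the set of all odd vertices {1, 3, 5, ..., n}. For even n ≥ 2, the independent dominating sets of P_n of size n/2 are exactly: the set of all even vertices {2,4,...,n}, the set of all odd vertices {1,3,...,n−1}, and the sets {1, 3, 5, ..., 2j−1, 2j+2, 2j+4, ..., n} for each integer j with 1 ≤ j ≤ n/2 − 1. -/
/- `Γ(π)`: the dominating set produced on `P n` when vertices are revealed in the order
   `π 0, π 1, ..., π (n-1)`. -/
noncomputable def GammaSet (n : ℕ) (π : Equiv.Perm (Fin n)) : Finset (Fin n) :=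
  domList (pathGraph n) (List.ofFn fun i => π i)

/- `γ(π) = |Γ(π)|`. -/
noncomputable def gamma (n : ℕ) (π : Equiv.Perm (Fin n)) : ℕ := (GammaSet n π).card

/- `S` is an independent dominating set of `P n`. -/
def IsIndepDomSet (n : ℕ) (S : Finset (Fin n)) : Prop :=
  (∀ u ∈ S, ∀ v ∈ S, ¬ (pathGraph n).Adj u v) ∧
  (∀ v : Fin n, v ∈ S ∨ ∃ u ∈ S, (pathGraph n).Adj u v)

/-!
Cut the path (vertices `0, …, n - 1`) into the blocks `{2i, 2i + 1}`, the last one a singleton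
when `n` is odd. Two vertices of a block are adjacent, so an independent set meets each of the
`⌈n/2⌉` blocks at most once, and a set of size `⌈n/2⌉` meets each exactly once. Once it picks the
odd vertex `2i + 1` of a block it cannot pick `2i + 2`, so it picks the odd vertex of every later
block: the set consists of the even vertices of the first `j` blocks and the odd vertices of the
others. For odd `n` the singleton last block forces `j = ⌈n/2⌉`. Conversely each of these sets is
independent, dominating and of size `⌈n/2⌉`.
-/

open Finset

theorem Nat.exists_forall_iff_lt_of_antitone {p : ℕ → Prop} (hp : Antitone p)
    (h : ∃ m, ¬ p m) : ∃ j, ∀ i, p i ↔ i < j := by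
  classical
  refine ⟨Nat.find h, fun i => ?_⟩
  simp only [Nat.lt_find_iff, not_not]
  exact ⟨fun hi k hk => hp hk hi, fun h => h i le_rfl⟩

namespace pathGraph

/-- With the labels `v + 1`, this is `{1, 3, …, 2j - 1} ∪ {2j + 2, 2j + 4, …}`. -/
def stairSet (n j : ℕ) : Finset (Fin n) :=
  univ.filter fun v => (v : ℕ) % 2 = 0 ↔ (v : ℕ) < 2 * j

variable {n j : ℕ} {S : Finset (Fin n)}

theorem mem_stairSet {v : Fin n} : v ∈ stairSet n j ↔ ((v : ℕ) % 2 = 0 ↔ (v : ℕ) < 2 * j) := by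
  simp [stairSet]

theorem injOn_div_two (hS : ∀ u ∈ S, ∀ v ∈ S, ¬ (pathGraph n).Adj u v) :
    Set.InjOn (fun v : Fin n => (v : ℕ) / 2) S := by
  intro u hu v hv huv
  by_contra hne
  exact hS u hu v hv (by simp only [pathGraph, Fin.ext_iff] at huv hne ⊢; omega)

theorem card_eq_iff_forall_exists_div_two_eq (hS : ∀ u ∈ S, ∀ v ∈ S, ¬ (pathGraph n).Adj u v) :
    S.card = (n + 1) / 2 ↔ ∀ i < (n + 1) / 2, ∃ v ∈ S, (v : ℕ) / 2 = i := by
  have hsub : S.image (fun v : Fin n => (v : ℕ) / 2) ⊆ range ((n + 1) / 2) := by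
    intro i
    simp only [mem_image, mem_range]
    rintro ⟨v, -, rfl⟩
    omega
  rw [← card_image_of_injOn (injOn_div_two hS)]
  constructor
  · intro h i hi
    have himage := eq_of_subset_of_card_le hsub (by rw [card_range, h])
    rw [← mem_range, ← himage] at hi
    simpa using hi
  · intro h
    rw [hsub.antisymm fun i hi => by simpa using h i (mem_range.1 hi), card_range]

theorem stairSet_indep :
    ∀ u ∈ stairSet n j, ∀ v ∈ stairSet n j, ¬ (pathGraph n).Adj u v := by
  intro u hu v hv
  simp only [mem_stairSet] at hu hv
  simp only [pathGraph]
  omega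

theorem isIndepDomSet_stairSet (h : n % 2 = 1 → n < 2 * j) : IsIndepDomSet n (stairSet n j) := by
  refine ⟨stairSet_indep, fun v => or_iff_not_imp_left.2 fun hv => ?_⟩
  rw [mem_stairSet] at hv
  have := v.isLt
  rcases Nat.mod_two_eq_zero_or_one v with hpar | hpar
  · refine ⟨⟨v + 1, by omega⟩, mem_stairSet.2 (by simp only; omega), Or.inr rfl⟩
  · refine ⟨⟨v - 1, by omega⟩, mem_stairSet.2 (by simp only; omega), Or.inl (by simp only; omega)⟩

theorem card_stairSet (h : n % 2 = 1 → n < 2 * j) : (stairSet n j).card = (n + 1) / 2 := by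
  refine (card_eq_iff_forall_exists_div_two_eq stairSet_indep).2 fun i hi => ?_
  by_cases hij : i < j
  · exact ⟨⟨2 * i, by omega⟩, mem_stairSet.2 (by simp only; omega), by simp⟩
  · exact ⟨⟨2 * i + 1, by omega⟩, mem_stairSet.2 (by simp only; omega), by simp only; omega⟩

theorem mem_iff_mod_two_eq_zero_iff (hS : ∀ u ∈ S, ∀ v ∈ S, ¬ (pathGraph n).Adj u v)
    (hcard : S.card = (n + 1) / 2) (v : Fin n) :
    v ∈ S ↔ ((v : ℕ) % 2 = 0 ↔ ∃ u ∈ S, (u : ℕ) = 2 * (v / 2)) := by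
  have hsep : ∀ u ∈ S, ∀ v ∈ S, (u : ℕ) + 1 ≠ v := fun u hu v hv h => hS u hu v hv (Or.inl h)
  obtain ⟨w, hw, hwv⟩ := (card_eq_iff_forall_exists_div_two_eq hS).1 hcard (v / 2) (by omega)
  constructor
  · intro hv
    rcases Nat.mod_two_eq_zero_or_one v with hpar | hpar
    · exact iff_of_true hpar ⟨v, hv, by omega⟩
    · exact iff_of_false (by omega) fun ⟨u, hu, hu2⟩ => hsep u hu v hv (by omega)
  · intro h
    rcases Nat.mod_two_eq_zero_or_one v with hpar | hpar
    · obtain ⟨u, hu, hu2⟩ := h.1 hpar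
      exact (Fin.ext (by omega) : u = v) ▸ hu
    · have hwv' : (w : ℕ) = v := by
        by_contra hne
        exact absurd (h.2 ⟨w, hw, by omega⟩) (by omega)
      exact Fin.ext hwv' ▸ hw

theorem exists_eq_stairSet_of_card_eq (hS : ∀ u ∈ S, ∀ v ∈ S, ¬ (pathGraph n).Adj u v)
    (hcard : S.card = (n + 1) / 2) : ∃ j, (n % 2 = 1 → n < 2 * j) ∧ S = stairSet n j := by
  have hblock := (card_eq_iff_forall_exists_div_two_eq hS).1 hcard
  let p i := i < (n + 1) / 2 ∧ ∃ v ∈ S, (v : ℕ) = 2 * i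
  have hp : Antitone p := antitone_nat_of_succ_le fun i ⟨hi, v, hv, hvi⟩ => by
    obtain ⟨w, hw, hwi⟩ := hblock i (by omega)
    exact ⟨by omega, w, hw, by have := hS w hw v hv; simp only [pathGraph] at this; omega⟩
  obtain ⟨j, hj⟩ := Nat.exists_forall_iff_lt_of_antitone hp ⟨(n + 1) / 2, fun h => h.1.false⟩
  have hmem (v : Fin n) : v ∈ S ↔ ((v : ℕ) % 2 = 0 ↔ (v : ℕ) < 2 * j) := by
    have hpv : p (v / 2) ↔ (v : ℕ) < 2 * j := (hj _).trans (by omega)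
    exact (mem_iff_mod_two_eq_zero_iff hS hcard v).trans
      (iff_congr Iff.rfl ((and_iff_right (by omega)).symm.trans hpv))
  refine ⟨j, fun hn => ?_, ext fun v => by rw [hmem, mem_stairSet]⟩
  obtain ⟨v, hv, hvm⟩ := hblock ((n + 1) / 2 - 1) (by omega)
  have := (hmem v).1 hv
  have := v.isLt
  omega

theorem isIndepDomSet_and_card_eq_iff :
    IsIndepDomSet n S ∧ S.card = (n + 1) / 2 ↔
      ∃ j, (n % 2 = 1 → n < 2 * j) ∧ S = stairSet n j := by
  constructor
  · rintro ⟨⟨hS, -⟩, hcard⟩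
    exact exists_eq_stairSet_of_card_eq hS hcard
  · rintro ⟨j, h, rfl⟩
    exact ⟨isIndepDomSet_stairSet h, card_stairSet h⟩

end pathGraph

open pathGraph in
theorem max_indep_dom_sets_characterization :
    (∀ n : ℕ, n % 2 = 1 → ∀ S : Finset (Fin n),
      (IsIndepDomSet n S ∧ S.card = (n + 1) / 2) ↔
        S = Finset.univ.filter (fun v : Fin n => ((v : ℕ) + 1) % 2 = 1)) ∧
    (∀ n : ℕ, n % 2 = 0 → 2 ≤ n → ∀ S : Finset (Fin n),
      (IsIndepDomSet n S ∧ S.card = n / 2) ↔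
        (S = Finset.univ.filter (fun v : Fin n => ((v : ℕ) + 1) % 2 = 0) ∨
         S = Finset.univ.filter (fun v : Fin n => ((v : ℕ) + 1) % 2 = 1) ∨
         ∃ j : ℕ, 1 ≤ j ∧ j ≤ n / 2 - 1 ∧
           S = Finset.univ.filter (fun v : Fin n =>
             ((v : ℕ) + 1 ≤ 2 * j - 1 ∧ ((v : ℕ) + 1) % 2 = 1) ∨
             (2 * j + 2 ≤ (v : ℕ) + 1 ∧ ((v : ℕ) + 1) % 2 = 0)))) := by
  refine ⟨fun n hn S => ?_, fun n hn _ S => ?_⟩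
  · rw [isIndepDomSet_and_card_eq_iff]
    constructor
    · rintro ⟨j, hj, rfl⟩
      ext v
      simp only [mem_stairSet, mem_filter, mem_univ, true_and]
      omega
    · rintro rfl
      refine ⟨(n + 1) / 2, by omega, ext fun v => ?_⟩
      simp only [mem_stairSet, mem_filter, mem_univ, true_and]
      omega
  · rw [show n / 2 = (n + 1) / 2 by omega, isIndepDomSet_and_card_eq_iff]
    constructor
    · rintro ⟨j, -, rfl⟩
      have hj : j = 0 ∨ (n + 1) / 2 ≤ j ∨ 1 ≤ j ∧ j ≤ (n + 1) / 2 - 1 := by omega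
      refine hj.imp (fun hj => ?_) (Or.imp (fun hj => ?_) fun hj => ⟨j, hj.1, hj.2, ?_⟩) <;>
        ext v <;> simp only [mem_stairSet, mem_filter, mem_univ, true_and] <;> omega
    · rintro (rfl | rfl | ⟨j, hj1, hj2, rfl⟩)
      on_goal 1 => refine ⟨0, by omega, ?_⟩
      on_goal 2 => refine ⟨(n + 1) / 2, by omega, ?_⟩
      on_goal 3 => refine ⟨j, by omega, ?_⟩
      all_goals ext v; simp only [mem_stairSet, mem_filter, mem_univ, true_and]; omega
end
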